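/- Monotonicity in u: suppose p₁ > p₂ are nonzero reals, α₁, α₂ > 0, and x₁ = ⟨w^{p₁}⟩_{J₁}, y₁ = ⟨w^{p₂}⟩_{J₁} where w ≤ a on J₁. Then for u ≥ a the function ψ(u) = (α₁x₁ + α₂u^{p₁})^{1/p₁}(α₁y₁ + α₂u^{p₂})^{-1/p₂} is nondecreasing on [a, ∞). -/

import Mathlib

open MeasureTheory Real Filter

/-- A cube in `ℝᵈ` (a closed ball in the sup metric on `Fin d → ℝ`). -/
def IsCube {d : ℕ} (s : Set (Fin d → ℝ)) : Prop :=
  ∃ c : Fin d → ℝ, ∃ r : ℝ, 0 < r ∧ s = Metric.closedBall c r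

/-!
Taking logarithms, `log ψ = log A / p₁ - log B / p₂` with `A = α₁ x₁ + α₂ u^p₁` and
`B = α₁ y₁ + α₂ u^p₂`, whose derivative is `α₁ α₂ (u^p₁ y₁ - u^p₂ x₁) / (u A B)`.
Its sign is that of `u^p₁ y₁ - u^p₂ x₁ = ⨍ (u^p₁ w^p₂ - u^p₂ w^p₁)`, and the integrand is
nonnegative because `0 ≤ w ≤ a ≤ u` and `p₂ < p₁` give `(w/u)^p₁ ≤ (w/u)^p₂`.
-/

lemma rpow_mul_rpow_le_rpow_mul_rpow {t u p₁ p₂ : ℝ} (hp₁ : p₁ ≠ 0) (hp : p₂ ≤ p₁)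
    (ht : 0 ≤ t) (htu : t ≤ u) : u ^ p₂ * t ^ p₁ ≤ u ^ p₁ * t ^ p₂ := by
  rcases ht.eq_or_lt with rfl | ht
  · rw [zero_rpow hp₁, mul_zero]
    exact mul_nonneg (rpow_nonneg htu _) (rpow_nonneg le_rfl _)
  have hu : 0 < u := ht.trans_le htu
  have hratio : (t / u) ^ p₁ ≤ (t / u) ^ p₂ :=
    rpow_le_rpow_of_exponent_ge (div_pos ht hu) ((div_le_one hu).2 htu) hp
  rw [div_rpow ht.le hu.le, div_rpow ht.le hu.le,
    div_le_div_iff₀ (rpow_pos_of_pos hu _) (rpow_pos_of_pos hu _)] at hratio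
  linarith

lemma rpow_mul_setAverage_rpow_le {α : Type*} [MeasurableSpace α] {μ : Measure α} {s : Set α}
    {w : α → ℝ} {u p₁ p₂ : ℝ} (hp₁ : p₁ ≠ 0) (hp : p₂ ≤ p₁) (hs : MeasurableSet s)
    (hw0 : ∀ x, 0 ≤ w x) (hwu : ∀ x ∈ s, w x ≤ u)
    (hint₁ : IntegrableOn (fun x => w x ^ p₁) s μ) (hint₂ : IntegrableOn (fun x => w x ^ p₂) s μ) :
    u ^ p₂ * ⨍ x in s, w x ^ p₁ ∂μ ≤ u ^ p₁ * ⨍ x in s, w x ^ p₂ ∂μ := by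
  have hI : ∫ x in s, u ^ p₂ * w x ^ p₁ ∂μ ≤ ∫ x in s, u ^ p₁ * w x ^ p₂ ∂μ :=
    setIntegral_mono_on (hint₁.const_mul _) (hint₂.const_mul _) hs
      fun x hx => rpow_mul_rpow_le_rpow_mul_rpow hp₁ hp (hw0 x) (hwu x hx)
  rw [integral_const_mul, integral_const_mul] at hI
  simp only [setAverage_eq, smul_eq_mul]
  rw [mul_left_comm (u ^ p₂), mul_left_comm (u ^ p₁)]
  exact mul_le_mul_of_nonneg_left hI (inv_nonneg.2 measureReal_nonneg)

lemma setAverage_rpow_nonneg {α : Type*} [MeasurableSpace α] {μ : Measure α} {s : Set α}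
    {w : α → ℝ} (hw0 : ∀ x, 0 ≤ w x) (p : ℝ) : 0 ≤ ⨍ x in s, w x ^ p ∂μ := by
  rw [setAverage_eq, smul_eq_mul]
  exact mul_nonneg (by positivity) (integral_nonneg fun x => rpow_nonneg (hw0 x) p)

lemma hasDerivAt_log_add_mul_rpow_div {c α p u : ℝ} (hc : 0 ≤ c) (hα : 0 < α) (hp : p ≠ 0)
    (hu : 0 < u) :
    HasDerivAt (fun v => log (c + α * v ^ p) / p) (α * u ^ (p - 1) / (c + α * u ^ p)) u := by
  have hpos : 0 < c + α * u ^ p := by positivity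
  refine ((((hasDerivAt_rpow_const (Or.inl hu.ne')).const_mul α).const_add c).log
    hpos.ne').div_const p |>.congr_deriv ?_
  field_simp

lemma monotoneOn_rpow_one_div_mul_rpow_neg_one_div {p₁ p₂ α₁ α₂ x y a : ℝ}
    (hp₁ : p₁ ≠ 0) (hp₂ : p₂ ≠ 0) (hα₁ : 0 ≤ α₁) (hα₂ : 0 < α₂) (hx : 0 ≤ x) (hy : 0 ≤ y)
    (ha : 0 < a) (hxy : ∀ u ∈ Set.Ici a, u ^ p₂ * x ≤ u ^ p₁ * y) :
    MonotoneOn (fun u : ℝ =>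
        (α₁ * x + α₂ * u ^ p₁) ^ (1 / p₁) * (α₁ * y + α₂ * u ^ p₂) ^ (-(1 / p₂)))
      (Set.Ici a) := by
  set A := fun u : ℝ => α₁ * x + α₂ * u ^ p₁
  set B := fun u : ℝ => α₁ * y + α₂ * u ^ p₂
  set L := fun u : ℝ => log (A u) / p₁ - log (B u) / p₂
  have hApos : ∀ u, 0 < u → 0 < A u := fun u hu => by positivity
  have hBpos : ∀ u, 0 < u → 0 < B u := fun u hu => by positivity
  have hL' : ∀ u, 0 < u →
      HasDerivAt L (α₂ * u ^ (p₁ - 1) / A u - α₂ * u ^ (p₂ - 1) / B u) u := fun u hu =>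
    (hasDerivAt_log_add_mul_rpow_div (mul_nonneg hα₁ hx) hα₂ hp₁ hu).sub
      (hasDerivAt_log_add_mul_rpow_div (mul_nonneg hα₁ hy) hα₂ hp₂ hu)
  have hL'_nonneg : ∀ u ∈ Set.Ici a, 0 ≤ α₂ * u ^ (p₁ - 1) / A u - α₂ * u ^ (p₂ - 1) / B u := by
    intro u hu
    have hu0 : 0 < u := ha.trans_le hu
    have hdiff : α₂ * u ^ (p₁ - 1) * B u - α₂ * u ^ (p₂ - 1) * A u
        = α₂ * α₁ / u * (u ^ p₁ * y - u ^ p₂ * x) := by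
      rw [rpow_sub_one hu0.ne', rpow_sub_one hu0.ne']
      ring
    rw [sub_nonneg, div_le_div_iff₀ (hBpos u hu0) (hApos u hu0), ← sub_nonneg, hdiff]
    exact mul_nonneg (by positivity) (sub_nonneg.2 (hxy u hu))
  have hL : MonotoneOn L (Set.Ici a) := by
    refine monotoneOn_of_hasDerivWithinAt_nonneg (convex_Ici a)
      (f' := fun u => α₂ * u ^ (p₁ - 1) / A u - α₂ * u ^ (p₂ - 1) / B u)
      (fun u hu => (hL' u (ha.trans_le hu)).continuousAt.continuousWithinAt)
      (fun u hu => ?_) (fun u hu => ?_)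
    all_goals rw [interior_Ici] at hu
    · exact (hL' u (ha.trans hu)).hasDerivWithinAt
    · exact hL'_nonneg u (Set.mem_Ici.2 hu.le)
  have hexp : ∀ u, 0 < u → A u ^ (1 / p₁) * B u ^ (-(1 / p₂)) = exp (L u) := fun u hu => by
    rw [rpow_def_of_pos (hApos u hu), rpow_def_of_pos (hBpos u hu), ← exp_add]
    congr 1
    ring
  intro u hu v hv huv
  show A u ^ _ * B u ^ _ ≤ A v ^ _ * B v ^ _
  rw [hexp u (ha.trans_le hu), hexp v (ha.trans_le hv)]
  exact exp_le_exp.2 (hL hu hv huv)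

theorem monotone_in_u_general {d : ℕ} (p₁ p₂ : ℝ) (hp₁ : p₁ ≠ 0) (hp₂ : p₂ ≠ 0) (hp : p₂ < p₁)
    (α₁ α₂ : ℝ) (hα₁ : 0 < α₁) (hα₂ : 0 < α₂)
    (J₁ : Set (Fin d → ℝ)) (hJ₁ : MeasurableSet J₁)
    (w : (Fin d → ℝ) → ℝ) (hw0 : ∀ x, 0 ≤ w x)
    (a : ℝ) (ha : 0 < a) (hwa : ∀ x ∈ J₁, w x ≤ a)
    (hint₁ : IntegrableOn (fun x => w x ^ p₁) J₁)
    (hint₂ : IntegrableOn (fun x => w x ^ p₂) J₁)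
    (x₁ y₁ : ℝ) (hx₁ : x₁ = ⨍ x in J₁, w x ^ p₁) (hy₁ : y₁ = ⨍ x in J₁, w x ^ p₂) :
    MonotoneOn (fun u : ℝ =>
        (α₁ * x₁ + α₂ * u ^ p₁) ^ (1 / p₁) * (α₁ * y₁ + α₂ * u ^ p₂) ^ (-(1 / p₂)))
      (Set.Ici a) := by
  subst hx₁ hy₁
  exact monotoneOn_rpow_one_div_mul_rpow_neg_one_div hp₁ hp₂ hα₁.le hα₂
    (setAverage_rpow_nonneg hw0 p₁) (setAverage_rpow_nonneg hw0 p₂) ha fun u hu =>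
      rpow_mul_setAverage_rpow_le hp₁ hp.le hJ₁ hw0 (fun x hx => (hwa x hx).trans hu) hint₁ hint₂

theorem monotone_in_u {d : ℕ} (p₁ p₂ : ℝ) (hp₁ : p₁ ≠ 0) (hp₂ : p₂ ≠ 0) (hp : p₂ < p₁)
    (α₁ α₂ : ℝ) (hα₁ : 0 < α₁) (hα₂ : 0 < α₂)
    (J₁ : Set (Fin d → ℝ)) (hJ₁ : MeasurableSet J₁)
    (hJ₁pos : 0 < volume J₁) (hJ₁fin : volume J₁ < ⊤)
    (w : (Fin d → ℝ) → ℝ) (hw : Measurable w) (hw0 : ∀ x, 0 ≤ w x)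
    (a : ℝ) (ha : 0 < a) (hwa : ∀ x ∈ J₁, w x ≤ a)
    (hint₁ : IntegrableOn (fun x => w x ^ p₁) J₁)
    (hint₂ : IntegrableOn (fun x => w x ^ p₂) J₁)
    (x₁ y₁ : ℝ) (hx₁ : x₁ = ⨍ x in J₁, w x ^ p₁) (hy₁ : y₁ = ⨍ x in J₁, w x ^ p₂) :
    MonotoneOn (fun u : ℝ =>
        (α₁ * x₁ + α₂ * u ^ p₁) ^ (1 / p₁) * (α₁ * y₁ + α₂ * u ^ p₂) ^ (-(1 / p₂)))
      (Set.Ici a) :=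
  monotone_in_u_general p₁ p₂ hp₁ hp₂ hp α₁ α₂ hα₁ hα₂ J₁ hJ₁ w hw0 a ha hwa hint₁ hint₂ x₁ y₁ hx₁
    hy₁
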